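/- Let p be a prime and X a subset of 𝔽_p with 3 ≤ |X| ≤ p − 5. Suppose X = r([x,y] \ {z}) for some x, y, z, r ∈ 𝔽_p. If there are x', y', z', r' ∈ 𝔽_p such that X = r'([x',y'] \ {z'}), then r' ∈ {r, −r}. -/

import Mathlib

open scoped Pointwise

/-- The interval `[x,y]` in `ZMod p`: `{x, x+1, …, x+i}` where `i ∈ {0,…,p-1}`
reduces to `y - x` mod `p`. -/
def itv {p : ℕ} (x y : ZMod p) : Finset (ZMod p) :=
  (Finset.range ((y - x).val + 1)).image (fun i : ℕ => x + (i : ZMod p))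

/-!
Write `N_S(s) = shiftCount S s` for the number of `a ∈ S` with `a + s ∈ S`. A punctured
interval `A` of size `n` has `N_A(1) ≥ n - 2`, whereas an interval of length about `n` overlaps
its translate by `s` in roughly `n - |s|` points, plus a wrap-around overlap that `n ≤ p - 5`
keeps small; so `N_A(s) ≥ n - 2` forces `s ≡ k` with `|k| ≤ 3`. Dilation preserves these counts,
`N_{uA}(us) = N_A(s)`, so if `r • A = r' • B` with `B` another punctured interval, then
`u = r'⁻¹ r` satisfies `N_A(u⁻¹) = N_B(1) ≥ n - 2` and `N_B(u) = N_A(1) ≥ n - 2`. Hence `u` and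
`u⁻¹` are both `≡` integers of absolute value at most `3`, whose product is `≡ 1` and lies in
`[-9, 9]`; as `p ≥ 11` this product is `1`, so `u = ±1`.
-/

open Finset

section ShiftCount

variable {G : Type*} [DecidableEq G]

def shiftCount [Add G] (S : Finset G) (s : G) : ℕ :=
  #(S.filter (· + s ∈ S))

lemma shiftCount_mono [Add G] {S T : Finset G} (hST : S ⊆ T) (s : G) :
    shiftCount S s ≤ shiftCount T s :=
  card_le_card fun a ha => by
    simp only [mem_filter] at ha ⊢
    exact ⟨hST ha.1, hST ha.2⟩

lemma shiftCount_le_shiftCount_erase_add_two [AddGroup G] (S : Finset G) (s z : G) :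
    shiftCount S s ≤ shiftCount (S.erase z) s + 2 := by
  have hsub : ((S.filter (· + s ∈ S)).erase z).erase (z - s) ⊆
      (S.erase z).filter (· + s ∈ S.erase z) := by
    intro a ha
    simp only [mem_erase, mem_filter] at ha ⊢
    obtain ⟨has, haz, haS, hasS⟩ := ha
    exact ⟨⟨haz, haS⟩, fun h => has (eq_sub_of_add_eq h), hasS⟩
  have h1 := pred_card_le_card_erase (s := S.filter (· + s ∈ S)) (a := z)
  have h2 := pred_card_le_card_erase (s := (S.filter (· + s ∈ S)).erase z) (a := z - s)
  have h3 := card_le_card hsub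
  unfold shiftCount
  omega

lemma shiftCount_smul_finset {K : Type*} [DivisionRing K] [DecidableEq K] {t : K} (ht : t ≠ 0)
    (S : Finset K) (s : K) : shiftCount (t • S) (t * s) = shiftCount S s := by
  have : (t • S).filter (· + t * s ∈ t • S) = t • S.filter (· + s ∈ S) := by
    ext b
    simp only [mem_filter, mem_smul_finset, smul_eq_mul]
    constructor
    · rintro ⟨⟨a, ha, rfl⟩, c, hc, hca⟩
      refine ⟨a, ⟨ha, ?_⟩, rfl⟩
      rwa [mul_left_cancel₀ ht (hca.trans (mul_add t a s).symm)] at hc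
    · rintro ⟨a, ⟨ha, has⟩, rfl⟩
      exact ⟨⟨a, ha, rfl⟩, a + s, has, mul_add t a s⟩
  rw [shiftCount, shiftCount, this, card_smul_finset₀ ht]

end ShiftCount

lemma ne_zero_of_one_lt_card_smul_finset {α β : Type*} [Zero α] [Zero β] [SMulWithZero α β]
    [DecidableEq β] {c : α} {S : Finset β} (h : 1 < #(c • S)) : c ≠ 0 := by
  rintro rfl
  have := card_le_card (zero_smul_finset_subset (α := α) S)
  simp at this
  omega

lemma intCast_eq_one_or_neg_one_of_mul_eq_one {p k : ℕ} (hk : k * k + 1 < p) {a b : ℤ}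
    (ha : |a| ≤ k) (hb : |b| ≤ k) (hab : (a : ZMod p) * b = 1) :
    (a : ZMod p) = 1 ∨ (a : ZMod p) = -1 := by
  have hdvd : (p : ℤ) ∣ a * b - 1 :=
    (ZMod.intCast_zmod_eq_zero_iff_dvd _ p).mp (by push_cast; rw [hab, sub_self])
  have habs : |a * b - 1| < p :=
    calc |a * b - 1| ≤ |a| * |b| + |1| := abs_mul a b ▸ abs_sub _ _
      _ ≤ k * k + 1 := by rw [abs_one]; gcongr
      _ < p := by exact_mod_cast hk
  have hab1 : a * b = 1 := sub_eq_zero.mp (Int.eq_zero_of_abs_lt_dvd hdvd habs)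
  rcases Int.eq_one_or_neg_one_of_mul_eq_one hab1 with rfl | rfl <;> simp

section Interval

variable {p : ℕ} [NeZero p]

lemma exists_intCast_eq_of_val_le_or_le_val_add {s : ZMod p} {k : ℕ}
    (h : s.val ≤ k ∨ p ≤ s.val + k) : ∃ a : ℤ, |a| ≤ k ∧ (a : ZMod p) = s := by
  have hs := ZMod.val_lt s
  rcases h with h | h
  · exact ⟨s.val, abs_le.mpr ⟨by omega, by omega⟩, by simp⟩
  · exact ⟨s.val - p, abs_le.mpr ⟨by omega, by omega⟩, by simp⟩

lemma mem_itv {x y a : ZMod p} : a ∈ itv x y ↔ (a - x).val ≤ (y - x).val := by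
  simp only [itv, mem_image, mem_range]
  constructor
  · rintro ⟨i, hi, rfl⟩
    have hv := ZMod.val_lt (y - x)
    rw [add_sub_cancel_left, ZMod.val_cast_of_lt (by omega)]
    omega
  · exact fun h => ⟨(a - x).val, by omega, by simp⟩

lemma card_itv (x y : ZMod p) : #(itv x y) = (y - x).val + 1 := by
  rw [itv, card_image_of_injOn, card_range]
  intro i hi j hj hij
  simp only [coe_range, Set.mem_Iio] at hi hj
  have hv := ZMod.val_lt (y - x)
  simpa [ZMod.val_cast_of_lt (hi.trans_le hv), ZMod.val_cast_of_lt (hj.trans_le hv)] using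
    congrArg ZMod.val (add_left_cancel hij)

lemma add_one_mem_itv {x y a : ZMod p} (ha : a ∈ itv x y) (hay : a ≠ y) : a + 1 ∈ itv x y := by
  rw [mem_itv] at ha ⊢
  have hlt : (a - x).val < (y - x).val :=
    ha.lt_of_ne fun h => hay (sub_left_inj.mp (ZMod.val_injective p h))
  have h1 : (1 : ZMod p).val ≤ 1 := by rw [ZMod.val_one_eq_one_mod]; exact Nat.mod_le 1 p
  rw [add_sub_right_comm]
  exact (ZMod.val_add_le _ _).trans (by omega)

lemma card_le_shiftCount_one_erase_itv (x y z : ZMod p) :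
    #((itv x y).erase z) ≤ shiftCount ((itv x y).erase z) 1 + 2 := by
  have hI : #(itv x y) - 1 ≤ shiftCount (itv x y) 1 :=
    (pred_card_le_card_erase).trans <| card_le_card fun a ha => by
      obtain ⟨hay, ha⟩ := mem_erase.mp ha
      exact mem_filter.mpr ⟨ha, add_one_mem_itv ha hay⟩
  have hcard : 0 < #(itv x y) := by rw [card_itv]; omega
  by_cases hz : z ∈ itv x y
  · have := shiftCount_le_shiftCount_erase_add_two (itv x y) 1 z
    rw [card_erase_of_mem hz]
    omega
  · rw [erase_eq_of_notMem hz]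
    omega

lemma shiftCount_itv_le (x y s : ZMod p) :
    shiftCount (itv x y) s ≤ ((y - x).val + 1 - s.val) + ((y - x).val + 1 - (p - s.val)) := by
  calc shiftCount (itv x y) s
      ≤ #(range ((y - x).val + 1 - s.val) ∪ Ico (p - s.val) ((y - x).val + 1)) :=
        card_le_card_of_injOn (fun a => (a - x).val) ?_ ?_
    _ ≤ _ := (card_union_le _ _).trans (by rw [card_range, Nat.card_Ico])
  -- the offset `(a - x).val` of a counted `a` lies in the first range, or in the second
  -- one when `a + s` wraps around
  · intro a ha
    simp only [coe_filter, mem_itv, Set.mem_ofPred_eq, coe_union, coe_range, coe_Ico,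
      Set.mem_union, Set.mem_Iio, Set.mem_Ico] at ha ⊢
    obtain ⟨ha, has⟩ := ha
    rw [add_sub_right_comm, ZMod.val_add] at has
    have := ZMod.val_lt (a - x)
    have := ZMod.val_lt s
    rcases Nat.lt_or_ge ((a - x).val + s.val) p with hlt | hge
    · rw [Nat.mod_eq_of_lt hlt] at has
      omega
    · omega
  · intro a _ b _ hab
    exact sub_left_inj.mp (ZMod.val_injective p hab)

lemma exists_intCast_eq_of_card_erase_itv_le_shiftCount_add_two {x y z s : ZMod p}
    (hn3 : 3 ≤ #((itv x y).erase z)) (hn5 : #((itv x y).erase z) + 5 ≤ p)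
    (hs : #((itv x y).erase z) ≤ shiftCount ((itv x y).erase z) s + 2) :
    ∃ a : ℤ, |a| ≤ 3 ∧ (a : ZMod p) = s := by
  apply exists_intCast_eq_of_val_le_or_le_val_add (k := 3)
  have hI := shiftCount_itv_le x y s
  have hmono := shiftCount_mono (erase_subset z (itv x y)) s
  have hcard := pred_card_le_card_erase (s := itv x y) (a := z)
  have hcard' := card_erase_le (s := itv x y) (a := z)
  rw [card_itv] at hcard hcard'
  have := ZMod.val_lt s
  omega

end Interval

lemma exists_intCast_eq_inv_of_erase_itv_eq_smul {p : ℕ} [Fact p.Prime]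
    {x y z x' y' z' u : ZMod p} (hu : u ≠ 0) (hn3 : 3 ≤ #((itv x y).erase z))
    (hn5 : #((itv x y).erase z) + 5 ≤ p)
    (h : (itv x' y').erase z' = u • (itv x y).erase z) :
    ∃ a : ℤ, |a| ≤ 3 ∧ (a : ZMod p) = u⁻¹ := by
  refine exists_intCast_eq_of_card_erase_itv_le_shiftCount_add_two hn3 hn5 ?_
  calc #((itv x y).erase z) = #((itv x' y').erase z') := by rw [h, card_smul_finset₀ hu]
    _ ≤ shiftCount ((itv x' y').erase z') 1 + 2 := card_le_shiftCount_one_erase_itv x' y' z'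
    _ = shiftCount ((itv x y).erase z) u⁻¹ + 2 := by
      rw [h, ← mul_inv_cancel₀ hu, shiftCount_smul_finset hu]

theorem stmt_3 (p : ℕ) (hp : p.Prime) (X : Finset (ZMod p))
    (h3 : 3 ≤ X.card) (h5 : X.card ≤ p - 5)
    (x y z r : ZMod p) (hX : X = r • ((itv x y).erase z))
    (x' y' z' r' : ZMod p) (hX' : X = r' • ((itv x' y').erase z')) :
    r' = r ∨ r' = -r := by
  have := Fact.mk hp
  have hp11 : 11 ≤ p := by
    have : 8 ≤ p := by omega
    by_contra! hlt
    interval_cases p <;> norm_num at hp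
  have hr : r ≠ 0 := ne_zero_of_one_lt_card_smul_finset (by rw [← hX]; omega)
  have hr' : r' ≠ 0 := ne_zero_of_one_lt_card_smul_finset (by rw [← hX']; omega)
  have hnA : #((itv x y).erase z) = #X := by rw [hX, card_smul_finset₀ hr]
  have hnB : #((itv x' y').erase z') = #X := by rw [hX', card_smul_finset₀ hr']
  set u := r'⁻¹ * r with hu_def
  have hu : u ≠ 0 := mul_ne_zero (inv_ne_zero hr') hr
  have hBA : (itv x' y').erase z' = u • (itv x y).erase z := by
    rw [mul_smul, ← hX, hX', inv_smul_smul₀ hr']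
  have hAB : (itv x y).erase z = u⁻¹ • (itv x' y').erase z' := by
    rw [hBA, inv_smul_smul₀ hu]
  obtain ⟨b, hb, hbu⟩ := exists_intCast_eq_inv_of_erase_itv_eq_smul hu (by omega) (by omega) hBA
  obtain ⟨a, ha, hau⟩ :=
    exists_intCast_eq_inv_of_erase_itv_eq_smul (inv_ne_zero hu) (by omega) (by omega) hAB
  rw [inv_inv] at hau
  rcases intCast_eq_one_or_neg_one_of_mul_eq_one (p := p) (k := 3) (by omega) ha hb
    (by rw [hau, hbu, mul_inv_cancel₀ hu]) with h | h <;> rw [hau, hu_def] at h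
  · exact Or.inl ((inv_mul_eq_one₀ hr').mp h)
  · right
    rw [inv_mul_eq_iff_eq_mul₀ hr'] at h
    linear_combination h
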